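/- Let A be a commutative Noetherian local ring, P a finitely generated projective A[T]-module, and f ∈ A[T] a monic polynomial. If the localization P_f has a unimodular element, then P has a unimodular element. (Roitman's lemma.) -/

import Mathlib

set_option linter.unusedSectionVars false
set_option maxHeartbeats 1600000

/-- A module has a unimodular element if some element is mapped to `1` by a linear functional. -/
def HasUnimodular (R M : Type*) [CommRing R] [AddCommGroup M] [Module R M] : Prop :=
  ∃ (m : M) (φ : M →ₗ[R] R), φ m = 1


namespace RoitmanProof

open Polynomial

section RoitmanAux
variable {A : Type*} [CommRing A] [IsLocalRing A]

variable (A) in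
/-- Reduction of polynomials modulo the maximal ideal. -/
noncomputable def residP : Polynomial A →+* Polynomial (IsLocalRing.ResidueField A) :=
  Polynomial.mapRingHom (IsLocalRing.residue A)

lemma residP_surjective : Function.Surjective (residP A) :=
  Polynomial.map_surjective _ Ideal.Quotient.mk_surjective

lemma residP_eq_zero_iff {x : Polynomial A} :
    residP A x = 0 ↔ ∀ n, x.coeff n ∈ IsLocalRing.maximalIdeal A := by
  constructor
  · intro h n
    have := congrArg (fun p => Polynomial.coeff p n) h
    simp only [residP, Polynomial.coe_mapRingHom, Polynomial.coeff_map, Polynomial.coeff_zero] at this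
    exact (Ideal.Quotient.eq_zero_iff_mem).1 this
  · intro h
    ext n
    simp only [residP, Polynomial.coe_mapRingHom, Polynomial.coeff_map, Polynomial.coeff_zero]
    exact (Ideal.Quotient.eq_zero_iff_mem).2 (h n)

lemma mk_C_mul_smul (I : Ideal (Polynomial A)) (a : A) (x : Polynomial A) :
    Ideal.Quotient.mk I (Polynomial.C a * x) = a • Ideal.Quotient.mk I x := by
  have := map_smul (Ideal.Quotient.mkₐ A I) a x
  simp only [Ideal.Quotient.mkₐ_eq_mk] at this
  rw [← this, Polynomial.smul_eq_C_mul]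

/-- If `resid z = 0` (all coefficients of `z` lie in `m`), then the class of `z` in `A[X]⧸I`
lies in `m • ⊤`. -/
lemma mk_mem_smul_of_residP_eq_zero (I : Ideal (Polynomial A)) {z : Polynomial A}
    (hz : residP A z = 0) :
    Ideal.Quotient.mk I z ∈
      (IsLocalRing.maximalIdeal A) • (⊤ : Submodule A (Polynomial A ⧸ I)) := by
  have hcoeff : ∀ n, z.coeff n ∈ IsLocalRing.maximalIdeal A := residP_eq_zero_iff.1 hz
  have hzsum : z = ∑ n ∈ z.support, Polynomial.C (z.coeff n) * Polynomial.X ^ n := by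
    conv_lhs => rw [Polynomial.as_sum_support z]
    simp [Polynomial.C_mul_X_pow_eq_monomial]
  rw [hzsum, map_sum]
  refine Submodule.sum_mem _ (fun n _ => ?_)
  rw [mk_C_mul_smul]
  exact Submodule.smul_mem_smul (hcoeff n) trivial


/-- If `I` contains a monic polynomial `g`, the classes of `X^j`, `j < natDegree g`,
span `A[X]⧸I` over `A`. -/
lemma span_pow_X_eq_top (I : Ideal (Polynomial A)) {g : Polynomial A} (hg : g.Monic)
    (hgI : g ∈ I) :
    Submodule.span A (Set.range fun j : Fin g.natDegree =>
      (Ideal.Quotient.mk I (Polynomial.X ^ (j : ℕ)))) = ⊤ := by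
  rw [eq_top_iff]
  rintro c -
  obtain ⟨x, rfl⟩ := Ideal.Quotient.mk_surjective c
  have hdiv : Ideal.Quotient.mk I x = Ideal.Quotient.mk I (x %ₘ g) := by
    conv_lhs => rw [← Polynomial.modByMonic_add_div x g]
    rw [map_add, (Ideal.Quotient.eq_zero_iff_mem).2 (Ideal.mul_mem_right _ _ hgI), add_zero]
  rw [hdiv]
  set r := x %ₘ g with hr
  by_cases hr0 : r = 0
  · rw [hr0, map_zero]; exact Submodule.zero_mem _
  · have hdeg : r.natDegree < g.natDegree :=
      Polynomial.natDegree_lt_natDegree hr0 (Polynomial.degree_modByMonic_lt x hg)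
    have hsum : r = ∑ j ∈ Finset.range g.natDegree, Polynomial.C (r.coeff j) * Polynomial.X ^ j := by
      conv_lhs => rw [Polynomial.as_sum_range' r g.natDegree hdeg]
      simp [Polynomial.C_mul_X_pow_eq_monomial]
    rw [hsum, map_sum]
    refine Submodule.sum_mem _ (fun j hj => ?_)
    rw [mk_C_mul_smul]
    exact Submodule.smul_mem _ _
      (Submodule.subset_span ⟨⟨j, Finset.mem_range.1 hj⟩, rfl⟩)

open scoped Classical in
lemma finite_quotient_of_monic_mem (I : Ideal (Polynomial A)) {g : Polynomial A} (hg : g.Monic)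
    (hgI : g ∈ I) : Module.Finite A (Polynomial A ⧸ I) := by
  refine Module.finite_def.mpr ⟨Finset.univ.image
    (fun j : Fin g.natDegree => (Ideal.Quotient.mk I (Polynomial.X ^ (j : ℕ)))), ?_⟩
  rw [Finset.coe_image, Finset.coe_univ, Set.image_univ]
  exact span_pow_X_eq_top I hg hgI

lemma subsingleton_of_top_le_smul (C : Type*) [AddCommGroup C] [Module A C] [Module.Finite A C]
    (hC : (⊤ : Submodule A C) ≤ (IsLocalRing.maximalIdeal A) • (⊤ : Submodule A C)) :
    Subsingleton C := by
  have hbot : (⊤ : Submodule A C) = ⊥ :=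
    Submodule.eq_bot_of_le_smul_of_le_jacobson_bot (IsLocalRing.maximalIdeal A) ⊤
      (Module.finite_def.mp inferInstance) hC
      (by rw [IsLocalRing.jacobson_eq_maximalIdeal (⊥ : Ideal A) bot_ne_top])
  constructor
  intro a b
  have ha : a ∈ (⊥ : Submodule A C) := hbot ▸ Submodule.mem_top
  have hb : b ∈ (⊥ : Submodule A C) := hbot ▸ Submodule.mem_top
  rw [Submodule.mem_bot] at ha hb
  rw [ha, hb]


lemma submodule_eq_top_of_top_le_sup_smul {C : Type*} [AddCommGroup C] [Module A C]
    [Module.Finite A C] (N : Submodule A C)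
    (h : (⊤ : Submodule A C) ≤ N ⊔ (IsLocalRing.maximalIdeal A) • ⊤)
    (hsub : (⊤ : Submodule A (C ⧸ N)) ≤ (IsLocalRing.maximalIdeal A) • (⊤ : Submodule A (C ⧸ N))
      → Subsingleton (C ⧸ N)) :
    N = ⊤ := by
  haveI : Module.Finite A (C ⧸ N) :=
    Module.Finite.of_surjective N.mkQ (Submodule.Quotient.mk_surjective N)
  have hQ : (⊤ : Submodule A (C ⧸ N)) ≤ (IsLocalRing.maximalIdeal A) • ⊤ := by
    rintro q -
    obtain ⟨c, rfl⟩ := Submodule.Quotient.mk_surjective N q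
    have hc : c ∈ N ⊔ (IsLocalRing.maximalIdeal A) • (⊤ : Submodule A C) :=
      h Submodule.mem_top
    obtain ⟨n, hn, t, ht, rfl⟩ := Submodule.mem_sup.1 hc
    have : N.mkQ (n + t) = N.mkQ t := by
      rw [map_add, show N.mkQ n = 0 from (Submodule.Quotient.mk_eq_zero N).2 hn, zero_add]
    rw [show Submodule.Quotient.mk (n + t) = N.mkQ (n + t) from rfl, this]
    have : N.mkQ t ∈ Submodule.map N.mkQ ((IsLocalRing.maximalIdeal A) • ⊤) :=
      Submodule.mem_map_of_mem ht
    rwa [Submodule.map_smul'', Submodule.map_top, Submodule.range_mkQ] at this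
  have : Subsingleton (C ⧸ N) := hsub hQ
  rw [eq_top_iff]
  rintro x -
  have : N.mkQ x = 0 := Subsingleton.elim _ _
  exact (Submodule.Quotient.mk_eq_zero N).1 this


/-- **Key lemma (Cayley–Hamilton).** If an ideal `I` of `A[X]` (`A` local) contains a monic
polynomial, then it contains a monic polynomial `h` whose reduction mod the maximal ideal
generates the reduction of `I`. -/
lemma exists_monic_mem_resid_generates (I : Ideal (Polynomial A)) {f₀ : Polynomial A}
    (hf₀ : f₀.Monic) (hf₀I : f₀ ∈ I) :
    ∃ h ∈ I, h.Monic ∧ I.map (residP A) = Ideal.span {residP A h} := by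
  classical
  set k := IsLocalRing.ResidueField A
  -- the reduction of I is a nonzero principal ideal
  haveI hprin : (I.map (residP A)).IsPrincipal := IsPrincipalIdealRing.principal _
  set g₁ := Submodule.IsPrincipal.generator (I.map (residP A)) with hg₁def
  have hspan₁ : Ideal.span {g₁} = I.map (residP A) := Ideal.span_singleton_generator _
  have hf₀mem : residP A f₀ ∈ I.map (residP A) := Ideal.mem_map_of_mem _ hf₀I
  have hf₀ne : residP A f₀ ≠ 0 := (hf₀.map _).ne_zero
  have hg₁ne : g₁ ≠ 0 := by
    intro h0
    rw [← hspan₁, h0, Ideal.span_singleton_eq_bot.2 rfl, Ideal.mem_bot] at hf₀mem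
    exact hf₀ne hf₀mem
  -- normalize the generator to be monic
  set d := g₁ * Polynomial.C (g₁.leadingCoeff)⁻¹ with hddef
  have hd : d.Monic := Polynomial.monic_mul_leadingCoeff_inv hg₁ne
  have hdspan : Ideal.span {d} = I.map (residP A) := by
    rw [hddef, Ideal.span_singleton_mul_right_unit, hspan₁]
    exact Polynomial.isUnit_C.2 (isUnit_iff_ne_zero.2 (inv_ne_zero
      (Polynomial.leadingCoeff_ne_zero.2 hg₁ne)))
  set δ := d.natDegree with hδdef
  -- the quotient C₀ = A[X]/I is a finite A-module
  haveI hfin : Module.Finite A (Polynomial A ⧸ I) := finite_quotient_of_monic_mem I hf₀ hf₀I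
  -- the classes of X^j, j < δ, generate C₀ over A
  set b : Fin δ → (Polynomial A ⧸ I) :=
    fun j => Ideal.Quotient.mk I (Polynomial.X ^ (j : ℕ)) with hbdef
  have hb : Submodule.span A (Set.range b) = ⊤ := by
    apply submodule_eq_top_of_top_le_sup_smul _ _ (subsingleton_of_top_le_smul _)
    rintro c -
    obtain ⟨x, rfl⟩ := Ideal.Quotient.mk_surjective c
    -- divide the reduction of x by d upstairs
    obtain ⟨i₀, hi₀I, hi₀⟩ : ∃ i₀ ∈ I, residP A i₀ = d := by
      have : d ∈ I.map (residP A) := by rw [← hdspan]; exact Ideal.subset_span rfl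
      obtain ⟨i₀, h1, h2⟩ := (Ideal.mem_map_iff_of_surjective _ residP_surjective).1 this
      exact ⟨i₀, h1, h2⟩
    obtain ⟨y, hy⟩ : ∃ y, residP A y = (residP A x) /ₘ d := residP_surjective _
    -- a coefficient-wise lift of the remainder, of controlled degree
    set r : Polynomial A := ∑ j ∈ Finset.range δ,
      Polynomial.C (Quotient.out (((residP A x) %ₘ d).coeff j)) * Polynomial.X ^ j with hrdef
    have hrlift : residP A r = (residP A x) %ₘ d := by
      have hcoeff : ∀ c : k, IsLocalRing.residue A (Quotient.out c) = c := fun c =>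
        Quotient.out_eq c
      rw [hrdef]
      rw [map_sum]
      have hdeg : ((residP A x) %ₘ d).natDegree < δ ∨ (residP A x) %ₘ d = 0 := by
        by_cases h0 : (residP A x) %ₘ d = 0
        · exact Or.inr h0
        · exact Or.inl (Polynomial.natDegree_lt_natDegree h0
            (Polynomial.degree_modByMonic_lt _ hd))
      have : ∀ j ∈ Finset.range δ, residP A (Polynomial.C (Quotient.out
          (((residP A x) %ₘ d).coeff j)) * Polynomial.X ^ j)
          = Polynomial.C (((residP A x) %ₘ d).coeff j) * Polynomial.X ^ j := by
        intro j _
        simp only [residP, Polynomial.coe_mapRingHom, Polynomial.map_mul, Polynomial.map_C,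
          Polynomial.map_pow, Polynomial.map_X]
        rw [hcoeff]
      rw [Finset.sum_congr rfl this]
      rcases hdeg with hdeg | hdeg
      · conv_rhs => rw [Polynomial.as_sum_range' _ δ hdeg]
        simp [Polynomial.C_mul_X_pow_eq_monomial]
      · rw [hdeg]; simp
    -- x - i₀ * y - r has all coefficients in m
    have hzker : residP A (x - i₀ * y - r) = 0 := by
      rw [map_sub, map_sub, map_mul, hi₀, hy, hrlift]
      have := Polynomial.modByMonic_add_div (residP A x) d
      ring_nf
      rw [mul_comm] at this
      linear_combination -this
    have hxdec : Ideal.Quotient.mk I x = Ideal.Quotient.mk I r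
        + Ideal.Quotient.mk I (x - i₀ * y - r) := by
      rw [← map_add, show r + (x - i₀ * y - r) = x - i₀ * y by ring, map_sub,
        show Ideal.Quotient.mk I (i₀ * y) = 0 from
          (Ideal.Quotient.eq_zero_iff_mem).2 (Ideal.mul_mem_right _ _ hi₀I), sub_zero]
    rw [hxdec]
    apply Submodule.add_mem_sup
    · -- mk r lies in the span of the b j
      rw [hrdef, map_sum]
      refine Submodule.sum_mem _ (fun j hj => ?_)
      rw [mk_C_mul_smul]
      exact Submodule.smul_mem _ _
        (Submodule.subset_span ⟨⟨j, Finset.mem_range.1 hj⟩, rfl⟩)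
    · exact mk_mem_smul_of_residP_eq_zero I hzker
  -- Cayley–Hamilton: the charpoly of multiplication by X on C₀
  set τ : Module.End A (Polynomial A ⧸ I) :=
    (Algebra.lmul A (Polynomial A ⧸ I)) (Ideal.Quotient.mk I Polynomial.X) with hτdef
  obtain ⟨Mm, hMm⟩ := Matrix.isRepresentation.toEnd_surjective A b hb τ
  set h : Polynomial A := Mm.1.charpoly with hhdef
  have hmonic : h.Monic := Mm.1.charpoly_monic
  have hdeg : h.natDegree = δ := by
    rw [hhdef, Mm.1.charpoly_natDegree_eq_dim, Fintype.card_fin]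
  have haeval : Polynomial.aeval τ h = 0 := by
    rw [← hMm, Polynomial.aeval_algHom_apply,
      ← map_zero (Matrix.isRepresentation.toEnd A b hb)]
    congr 1
    ext1
    rw [Polynomial.aeval_subalgebra_coe, Matrix.aeval_self_charpoly, Subalgebra.coe_zero]
  have hhI : h ∈ I := by
    have hlm : (Algebra.lmul A (Polynomial A ⧸ I))
        (Polynomial.aeval (Ideal.Quotient.mk I Polynomial.X) h) = 0 := by
      rw [← Polynomial.aeval_algHom_apply]; exact haeval
    have h1 : Polynomial.aeval (Ideal.Quotient.mk I Polynomial.X) h = 0 := by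
      have h2 := congrArg (fun φ : Module.End A (Polynomial A ⧸ I) => φ 1) hlm
      simpa using h2
    have h2 : Polynomial.aeval ((Ideal.Quotient.mkₐ A I) Polynomial.X) h = 0 := by
      simpa using h1
    rw [Polynomial.aeval_algHom_apply, Polynomial.aeval_X_left_apply] at h2
    simpa using (Ideal.Quotient.eq_zero_iff_mem).1 (by simpa using h2)
  -- the reduction of h equals d
  have hresid : residP A h = d := by
    have hmem : residP A h ∈ Ideal.span {d} := by rw [hdspan]; exact Ideal.mem_map_of_mem _ hhI
    obtain ⟨c, hc⟩ := Ideal.mem_span_singleton'.1 hmem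
    have hmapmonic : (residP A h).Monic := hmonic.map _
    have hmapdeg : (residP A h).natDegree = δ := by
      rw [residP, Polynomial.coe_mapRingHom, hmonic.natDegree_map, hdeg]
    have hcne : c ≠ 0 := by
      intro h0; rw [h0, zero_mul] at hc; exact hmapmonic.ne_zero hc.symm
    have hcdeg : c.natDegree = 0 := by
      have := Polynomial.natDegree_mul hcne hd.ne_zero
      rw [hc, hmapdeg] at this
      omega
    have hclead : c.leadingCoeff = 1 := by
      have := Polynomial.leadingCoeff_mul c d
      rw [hc, hmapmonic.leadingCoeff, hd.leadingCoeff, mul_one] at this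
      exact this.symm
    have : c = 1 := by
      rw [Polynomial.eq_C_of_natDegree_eq_zero hcdeg]
      rw [Polynomial.leadingCoeff, hcdeg] at hclead
      rw [hclead, Polynomial.C_1]
    rw [this, one_mul] at hc
    exact hc.symm
  exact ⟨h, hhI, hmonic, by rw [hresid, hdspan]⟩

end RoitmanAux


end RoitmanProof

open RoitmanProof Polynomial in
/-- Roitman's lemma: over a commutative Noetherian local ring `A`, if `P` is a finitely
generated projective `A[T]`-module, `f ∈ A[T]` is monic and `P_f` has a unimodular element,
then `P` has a unimodular element. -/
theorem stmt2 (A : Type*) [CommRing A] [IsNoetherianRing A] [IsLocalRing A]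
    (P : Type*) [AddCommGroup P] [Module (Polynomial A) P]
    [Module.Finite (Polynomial A) P] [Module.Projective (Polynomial A) P]
    (f : Polynomial A) (hf : f.Monic)
    (h : HasUnimodular (Localization (Submonoid.powers f))
      (LocalizedModule (Submonoid.powers f) P)) :
    HasUnimodular (Polynomial A) P := by
  classical
  obtain ⟨u, χ₀, hχ₀⟩ := h
  obtain ⟨p₀, s, rfl⟩ : ∃ p₀ s, LocalizedModule.mk p₀ s = u := by
    clear hχ₀
    induction u using LocalizedModule.induction_on with
    | h m s => exact ⟨m, s, rfl⟩
  obtain ⟨kk, hkk⟩ : ∃ n : ℕ, f ^ n = (s : Polynomial A) := s.2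
  -- the localization is injective on `A[X]` since `f` is monic
  have hSreg : (Submonoid.powers f) ≤ nonZeroDivisors (Polynomial A) := by
    rintro x ⟨n, rfl⟩
    exact (hf.pow n).mem_nonZeroDivisors
  have hinj : Function.Injective (algebraMap (Polynomial A) (Localization (Submonoid.powers f))) :=
    IsLocalization.injective _ hSreg
  -- χ : P → Localization (Submonoid.powers f) , x ↦ χ₀(x/1)
  set χ : P →ₗ[Polynomial A] Localization (Submonoid.powers f) :=
    (LinearMap.restrictScalars (Polynomial A) χ₀).comp (LocalizedModule.mkLinearMap (Submonoid.powers f) P)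
    with hχdef
  have hχp₀ : χ p₀ = algebraMap (Polynomial A) (Localization (Submonoid.powers f)) (f ^ kk) := by
    have h1 : LocalizedModule.mk p₀ (1 : (Submonoid.powers f)) = (s : Polynomial A) • LocalizedModule.mk p₀ s := by
      rw [LocalizedModule.smul'_mk, ← Submonoid.smul_def, LocalizedModule.mk_cancel]
    have : χ p₀ = χ₀ ((s : Polynomial A) • LocalizedModule.mk p₀ s) := by
      rw [hχdef]
      simp only [LinearMap.comp_apply, LinearMap.restrictScalars_apply,
        LocalizedModule.mkLinearMap_apply]
      rw [h1]
    rw [this, LinearMap.map_smul_of_tower, hχ₀, Algebra.smul_def, mul_one, hkk]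
  -- clear denominators
  obtain ⟨n, gg, hgg⟩ := Module.Finite.exists_fin (R := Polynomial A) (M := P)
  obtain ⟨bS, hbS⟩ := IsLocalization.exist_integer_multiples (Submonoid.powers f) Finset.univ
    (fun i : Fin n => χ (gg i))
  obtain ⟨E, hE⟩ : ∃ n : ℕ, f ^ n = (bS : Polynomial A) := bS.2
  set T := LinearMap.range (Algebra.linearMap (Polynomial A) (Localization (Submonoid.powers f))) with hTdef
  set ψ : P →ₗ[Polynomial A] Localization (Submonoid.powers f) := (bS : Polynomial A) • χ with hψdef
  have hψT : ∀ x : P, ψ x ∈ T := by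
    intro x
    have hx : x ∈ Submodule.span (Polynomial A) (Set.range gg) := by rw [hgg]; trivial
    induction hx using Submodule.span_induction with
    | mem y hy =>
      obtain ⟨i, rfl⟩ := hy
      obtain ⟨r, hr⟩ := hbS i (Finset.mem_univ i)
      exact ⟨r, hr⟩
    | zero => simp only [map_zero]; exact Submodule.zero_mem T
    | add y z _ _ hy hz => rw [map_add]; exact Submodule.add_mem T hy hz
    | smul r y _ hy => rw [map_smul]; exact Submodule.smul_mem T r hy
  set e₁ := LinearEquiv.ofInjective (Algebra.linearMap (Polynomial A) (Localization (Submonoid.powers f)))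
    (by exact hinj) with he₁def
  set Φ : P →ₗ[Polynomial A] Polynomial A :=
    e₁.symm.toLinearMap.comp (ψ.codRestrict T hψT) with hΦdef
  have hΦ : ∀ x : P, algebraMap (Polynomial A) (Localization (Submonoid.powers f)) (Φ x) = ψ x := by
    intro x
    have h2 : e₁ (Φ x) = ψ.codRestrict T hψT x := by
      rw [hΦdef]; exact e₁.apply_symm_apply _
    have h3 := congrArg Subtype.val h2
    exact h3
  have hΦp₀ : Φ p₀ = f ^ (E + kk) := by
    apply hinj
    rw [hΦ, hψdef, LinearMap.smul_apply, hχp₀, Algebra.smul_def, pow_add, map_mul, hE]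
  -- the order ideal of p₀
  set Ip : Ideal (Polynomial A) := LinearMap.range (LinearMap.applyₗ p₀) with hIpdef
  have hmonicIp : f ^ (E + kk) ∈ Ip := ⟨Φ, by simp [hΦp₀]⟩
  obtain ⟨hh, hhIp, hhmonic, hhgen⟩ :=
    exists_monic_mem_resid_generates Ip (hf.pow (E + kk)) hmonicIp
  obtain ⟨Ψ, hΨp₀⟩ := hhIp
  simp only [LinearMap.applyₗ_apply_apply] at hΨp₀
  -- dual basis computation producing q₀ with Ψ q₀ ≡ 1 mod m
  set π : (Fin n → Polynomial A) →ₗ[Polynomial A] P :=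
    Fintype.linearCombination (Polynomial A) gg with hπdef
  have hπsurj : Function.Surjective π := by
    rw [← LinearMap.range_eq_top, hπdef, Fintype.range_linearCombination, hgg]
  obtain ⟨sec, hsec⟩ := Module.projective_lifting_property π LinearMap.id hπsurj
  have hsecp : ∀ x : P, π (sec x) = x := by
    intro x
    have := LinearMap.congr_fun hsec x
    simpa using this
  have hsecIp : ∀ i, sec p₀ i ∈ Ip := by
    intro i
    exact ⟨(LinearMap.proj i).comp sec, rfl⟩
  have hsecdvd : ∀ i, ∃ c, c * residP A hh = residP A (sec p₀ i) := by
    intro i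
    have : residP A (sec p₀ i) ∈ Ip.map (residP A) := Ideal.mem_map_of_mem _ (hsecIp i)
    rw [hhgen] at this
    exact Ideal.mem_span_singleton'.1 this
  choose cc hcc using hsecdvd
  choose UU hUU using fun i => residP_surjective (cc i)
  set q₀ : P := π UU with hq₀def
  set w : Polynomial A := Ψ q₀ with hwdef
  have hkey : residP A (Ψ (p₀ - hh • q₀)) = 0 := by
    have hdecomp : p₀ - hh • q₀ = π (sec p₀ - hh • UU) := by
      rw [map_sub, hsecp, map_smul]
    have hΨπ : ∀ v : Fin n → Polynomial A, Ψ (π v) = ∑ i, v i * Ψ (gg i) := by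
      intro v
      rw [hπdef, Fintype.linearCombination_apply, map_sum]
      simp [smul_eq_mul]
    rw [hdecomp, hΨπ, map_sum]
    refine Finset.sum_eq_zero (fun i _ => ?_)
    rw [map_mul]
    have : residP A ((sec p₀ - hh • UU) i) = 0 := by
      simp only [Pi.sub_apply, Pi.smul_apply, smul_eq_mul, map_sub, map_mul]
      rw [← hcc i, hUU i]
      ring
    rw [this, zero_mul]
  have hresidw : residP A w = 1 := by
    have h4 : Ψ (p₀ - hh • q₀) = hh - hh * w := by
      rw [map_sub, hΨp₀, map_smul, smul_eq_mul, hwdef]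
    rw [h4, map_sub, map_mul] at hkey
    have h5 : residP A hh * (1 - residP A w) = 0 := by
      rw [mul_one_sub]; exact hkey
    have h6 : residP A hh ≠ 0 := (hhmonic.map _).ne_zero
    rcases mul_eq_zero.1 h5 with h7 | h7
    · exact absurd h7 h6
    · rw [sub_eq_zero] at h7; exact h7.symm
  -- Nakayama finale
  set J : Ideal (Polynomial A) := LinearMap.range Ψ with hJdef
  have hhJ : hh ∈ J := ⟨p₀, hΨp₀⟩
  have hwJ : w ∈ J := ⟨q₀, rfl⟩
  haveI : Module.Finite A (Polynomial A ⧸ J) := finite_quotient_of_monic_mem J hhmonic hhJ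
  have hC : (⊤ : Submodule A (Polynomial A ⧸ J)) ≤ (IsLocalRing.maximalIdeal A) • ⊤ := by
    rintro c -
    obtain ⟨x, rfl⟩ := Ideal.Quotient.mk_surjective c
    have hx : Ideal.Quotient.mk J x = Ideal.Quotient.mk J (x * (1 - w)) := by
      have hsplit : x = x * w + x * (1 - w) := by ring
      conv_lhs => rw [hsplit]
      have hmem : x * w ∈ J := by
        have := J.smul_mem x hwJ
        rwa [smul_eq_mul] at this
      rw [map_add, show Ideal.Quotient.mk J (x * w) = 0 from
        (Ideal.Quotient.eq_zero_iff_mem).2 hmem, zero_add]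
    rw [hx]
    apply mk_mem_smul_of_residP_eq_zero
    rw [map_mul, map_sub, map_one, hresidw, sub_self, mul_zero]
  have hsub : Subsingleton (Polynomial A ⧸ J) := subsingleton_of_top_le_smul _ hC
  have hone : (1 : Polynomial A) ∈ J := by
    have h8 : Ideal.Quotient.mk J 1 = 0 := Subsingleton.elim _ _
    exact (Ideal.Quotient.eq_zero_iff_mem).1 h8
  obtain ⟨e, he⟩ := hone
  exact ⟨e, Ψ, he⟩
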